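/- Let P be a wulpo that is a box-augmentation of connected wulpos Q₁, …, Qₙ. Then rank(P) ≤ rank(Q₁) ⊗ ⋯ ⊗ rank(Qₙ), where ⊗ is the natural (Hessenberg) product of ordinals. -/

import Mathlib

universe u

namespace Ordinal

/-- Natural (Hessenberg) addition of ordinals, as in Mathlib's former `Ordinal.nadd`. -/
noncomputable def nadd (a b : Ordinal.{u}) : Ordinal.{u} :=
  max (⨆ x : Set.Iio a, Order.succ (nadd x.1 b)) (⨆ x : Set.Iio b, Order.succ (nadd a x.1))
termination_by (a, b)
decreasing_by all_goals cases x; decreasing_tactic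

/-- Natural (Hessenberg) multiplication of ordinals, as in Mathlib's former `Ordinal.nmul`. -/
noncomputable def nmul (a b : Ordinal.{u}) : Ordinal.{u} :=
  sInf {c | ∀ a' < a, ∀ b' < b,
    nadd (nmul a' b) (nmul a b') < nadd c (nmul a' b')}
termination_by (a, b)

end Ordinal

infixl:70 " ⨳ " => Ordinal.nmul

/-- A partial order is upwards linear if for every `p` the set `{x | p < x}` is linearly
ordered. -/
def UpwardsLinear (P : Type u) [PartialOrder P] : Prop :=
  ∀ p x y : P, p < x → p < y → x ≤ y ∨ y ≤ x

/-- A partial order is connected if its comparability graph is connected. -/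
def ConnectedOrder (P : Type u) [PartialOrder P] : Prop :=
  ∀ x y : P, Relation.ReflTransGen (fun a b : P => a ≤ b ∨ b ≤ a) x y

/-- `η` witnesses that `A` is a box-augmentation of the family `B`. -/
def IsBoxAugmentation {n : ℕ} (A : Type u) [PartialOrder A] (B : Fin n → Type u)
    [∀ i, PartialOrder (B i)] (η : (∀ i, B i) ≃ A) : Prop :=
  ∀ (k : Fin n) (d : ∀ i, B i) (e e' : B k),
    e ≤ e' ↔ η (Function.update d k e) ≤ η (Function.update d k e')

/-- The ordinal rank of an element of a well-founded partial order. -/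
noncomputable def elRank {P : Type u} [PartialOrder P] [WellFoundedLT P] (p : P) :
    Ordinal.{u} :=
  IsWellFounded.rank (α := P) (· < ·) p

/-- The ordinal rank of a well-founded partial order. -/
noncomputable def ordRank (P : Type u) [PartialOrder P] [WellFoundedLT P] : Ordinal.{u} :=
  ⨆ p : P, elRank p + 1

/-!
The induction runs over bijections `η` that are monotone for the product order and under which
comparable points of `P` have pairwise comparable coordinates. The latter follows from upward
linearity of `P`, since a connected upwards linear order is directed: if `η c ≤ η d` and `u`
bounds `c` and `d`, then `η (u[k ↦ c k])` and `η (u[k ↦ d k])` both lie above `η c`. Both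
properties pass to sub-boxes, so we may induct on `μ = ⨳ rank (Q i)`, applying the induction
hypothesis to slabs `{p | p i ∈ S}` with `rank S < rank (Q i)`.

If every `rank (Q i)` is a power of `ω`, then so is `μ`, which is therefore closed under `♯`;
the points below `p` lie in the `n` slabs `{q | q i < p i}`, each of rank `< μ`, and
`rank (A ∪ B) ≤ rank A ♯ rank B`. Otherwise some `rank (Q i) = ω ^ e + ρ = ω ^ e ♯ ρ` with
both summands smaller; cutting `Q i` at rank `ω ^ e` splits `P` into two slabs, and
distributivity of `⨳` over `♯` reassembles their bounds into `μ`.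
-/

/-! ### Natural sum and product -/

infixl:65 " ♯ " => Ordinal.nadd

namespace Ordinal

open Order

theorem nadd_def (a b : Ordinal.{u}) : a ♯ b =
    max (⨆ x : Set.Iio a, succ (x.1 ♯ b)) (⨆ x : Set.Iio b, succ (a ♯ x.1)) := by
  rw [nadd]

theorem lt_nadd_iff {a b c : Ordinal.{u}} :
    a < b ♯ c ↔ (∃ b' < b, a ≤ b' ♯ c) ∨ ∃ c' < c, a ≤ b ♯ c' := by
  rw [nadd_def, lt_max_iff, Ordinal.lt_iSup_iff, Ordinal.lt_iSup_iff]
  simp only [Order.lt_succ_iff, Subtype.exists, Set.mem_Iio, exists_prop]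

theorem nadd_le_iff {a b c : Ordinal.{u}} :
    b ♯ c ≤ a ↔ (∀ b' < b, b' ♯ c < a) ∧ ∀ c' < c, b ♯ c' < a := by
  rw [nadd_def, max_le_iff, Ordinal.iSup_le_iff, Ordinal.iSup_le_iff]
  simp only [Order.succ_le_iff, Subtype.forall, Set.mem_Iio]

theorem nadd_left_strictMono (a : Ordinal.{u}) : StrictMono (a ♯ ·) :=
  fun _ _ h => lt_nadd_iff.2 (Or.inr ⟨_, h, le_rfl⟩)

theorem nadd_right_strictMono (a : Ordinal.{u}) : StrictMono (· ♯ a) :=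
  fun _ _ h => lt_nadd_iff.2 (Or.inl ⟨_, h, le_rfl⟩)

theorem nadd_le_nadd {a b c d : Ordinal.{u}} (h₁ : a ≤ b) (h₂ : c ≤ d) : a ♯ c ≤ b ♯ d :=
  ((nadd_left_strictMono a).monotone h₂).trans ((nadd_right_strictMono d).monotone h₁)

theorem nadd_lt_nadd_of_lt_of_le {a b c d : Ordinal.{u}} (h₁ : a < b) (h₂ : c ≤ d) :
    a ♯ c < b ♯ d :=
  ((nadd_left_strictMono a).monotone h₂).trans_lt (nadd_right_strictMono d h₁)

theorem nadd_lt_nadd_of_le_of_lt {a b c d : Ordinal.{u}} (h₁ : a ≤ b) (h₂ : c < d) :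
    a ♯ c < b ♯ d :=
  (nadd_left_strictMono a h₂).trans_le ((nadd_right_strictMono d).monotone h₁)

theorem lt_of_nadd_lt_nadd_right {a b c : Ordinal.{u}} (h : a ♯ c < b ♯ c) : a < b :=
  (nadd_right_strictMono c).lt_iff_lt.1 h

theorem le_self_nadd {a b : Ordinal.{u}} : a ≤ a ♯ b := by
  induction a using WellFoundedLT.induction with
  | _ a ih => exact le_of_forall_lt fun c hc => (ih c hc).trans_lt (nadd_right_strictMono b hc)

theorem nadd_comm (a b : Ordinal.{u}) : a ♯ b = b ♯ a := by
  induction a using WellFoundedLT.induction generalizing b with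
  | _ a iha =>
  induction b using WellFoundedLT.induction with
  | _ b ihb =>
  rw [nadd_def, nadd_def b a, max_comm]
  congr 1
  · exact iSup_congr fun x => by rw [ihb x.1 x.2]
  · exact iSup_congr fun x => by rw [iha x.1 x.2]

@[simp] theorem nadd_zero (a : Ordinal.{u}) : a ♯ 0 = a := by
  induction a using WellFoundedLT.induction with
  | _ a ih =>
  refine le_antisymm (nadd_le_iff.2 ⟨fun b hb => ?_, fun c hc => (not_lt_zero hc).elim⟩)
    le_self_nadd
  rwa [ih b hb]

@[simp] theorem zero_nadd (a : Ordinal.{u}) : 0 ♯ a = a := by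
  rw [nadd_comm, nadd_zero]

theorem add_le_nadd (a b : Ordinal.{u}) : a + b ≤ a ♯ b := by
  induction b using WellFoundedLT.induction with
  | _ b ih =>
  refine le_of_forall_lt fun c hc => ?_
  rcases lt_or_ge c a with h | h
  · exact h.trans_le le_self_nadd
  · obtain ⟨d, rfl⟩ : ∃ d, c = a + d := ⟨c - a, (Ordinal.add_sub_cancel_of_le h).symm⟩
    have hd : d < b := (add_lt_add_iff_left a).1 hc
    exact (ih d hd).trans_lt (nadd_left_strictMono a hd)

theorem nadd_assoc (a b c : Ordinal.{u}) : a ♯ b ♯ c = a ♯ (b ♯ c) := by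
  induction a using WellFoundedLT.induction generalizing b c with
  | _ a iha =>
  induction b using WellFoundedLT.induction generalizing c with
  | _ b ihb =>
  induction c using WellFoundedLT.induction with
  | _ c ihc =>
  refine le_antisymm (nadd_le_iff.2 ⟨fun x hx => ?_, fun c' hc => ?_⟩)
    (nadd_le_iff.2 ⟨fun a' ha => ?_, fun y hy => ?_⟩)
  · rcases lt_nadd_iff.1 hx with ⟨a', ha, hx⟩ | ⟨b', hb, hx⟩
    · calc x ♯ c ≤ a' ♯ b ♯ c := nadd_le_nadd hx le_rfl
        _ = a' ♯ (b ♯ c) := iha a' ha b c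
        _ < a ♯ (b ♯ c) := nadd_right_strictMono _ ha
    · calc x ♯ c ≤ a ♯ b' ♯ c := nadd_le_nadd hx le_rfl
        _ = a ♯ (b' ♯ c) := ihb b' hb c
        _ < a ♯ (b ♯ c) := nadd_left_strictMono a (nadd_right_strictMono c hb)
  · rw [ihc c' hc]; exact nadd_left_strictMono a (nadd_left_strictMono b hc)
  · rw [← iha a' ha b c]; exact nadd_right_strictMono c (nadd_right_strictMono b ha)
  · rcases lt_nadd_iff.1 hy with ⟨b', hb, hy⟩ | ⟨c', hc, hy⟩
    · calc a ♯ y ≤ a ♯ (b' ♯ c) := nadd_le_nadd le_rfl hy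
        _ = a ♯ b' ♯ c := (ihb b' hb c).symm
        _ < a ♯ b ♯ c := nadd_right_strictMono c (nadd_left_strictMono a hb)
    · calc a ♯ y ≤ a ♯ (b ♯ c') := nadd_le_nadd le_rfl hy
        _ = a ♯ b ♯ c' := (ihc c' hc).symm
        _ < a ♯ b ♯ c := nadd_left_strictMono _ hc

instance : Std.Associative Ordinal.nadd.{u} := ⟨nadd_assoc⟩

instance : Std.Commutative Ordinal.nadd.{u} := ⟨nadd_comm⟩

theorem nmul_def (a b : Ordinal.{u}) : a ⨳ b =
    sInf {c | ∀ a' < a, ∀ b' < b, a' ⨳ b ♯ a ⨳ b' < c ♯ a' ⨳ b'} := by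
  rw [nmul]

theorem nmul_nadd_lt {a' b' a b : Ordinal.{u}} (ha : a' < a) (hb : b' < b) :
    a' ⨳ b ♯ a ⨳ b' < a ⨳ b ♯ a' ⨳ b' := by
  have hne : {c | ∀ a' < a, ∀ b' < b, a' ⨳ b ♯ a ⨳ b' < c ♯ a' ⨳ b'}.Nonempty :=
    ⟨⨆ x : Set.Iio a × Set.Iio b, succ (x.1.1 ⨳ b ♯ a ⨳ x.2.1), fun a' ha b' hb =>
      (lt_succ _).trans_le ((Ordinal.le_iSup (fun x : Set.Iio a × Set.Iio b =>
        succ (x.1.1 ⨳ b ♯ a ⨳ x.2.1)) (⟨a', ha⟩, ⟨b', hb⟩)).trans le_self_nadd)⟩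
  have h := csInf_mem hne
  rw [← nmul_def a b] at h
  exact h a' ha b' hb

theorem nmul_nadd_le {a' b' a b : Ordinal.{u}} (ha : a' ≤ a) (hb : b' ≤ b) :
    a' ⨳ b ♯ a ⨳ b' ≤ a ⨳ b ♯ a' ⨳ b' := by
  rcases ha.lt_or_eq with ha | rfl
  · rcases hb.lt_or_eq with hb | rfl
    · exact (nmul_nadd_lt ha hb).le
    · exact (nadd_comm _ _).le
  · exact le_rfl

theorem nmul_le_iff {a b c : Ordinal.{u}} :
    a ⨳ b ≤ c ↔ ∀ a' < a, ∀ b' < b, a' ⨳ b ♯ a ⨳ b' < c ♯ a' ⨳ b' :=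
  ⟨fun h _ ha _ hb => (nmul_nadd_lt ha hb).trans_le (nadd_le_nadd h le_rfl),
    fun h => (nmul_def a b).trans_le (csInf_le' h)⟩

theorem lt_nmul_iff {a b c : Ordinal.{u}} :
    c < a ⨳ b ↔ ∃ a' < a, ∃ b' < b, c ♯ a' ⨳ b' ≤ a' ⨳ b ♯ a ⨳ b' := by
  refine ⟨fun h => ?_, fun ⟨a', ha, b', hb, h⟩ =>
    lt_of_nadd_lt_nadd_right (h.trans_lt (nmul_nadd_lt ha hb))⟩
  by_contra! hne
  exact h.not_ge (nmul_le_iff.2 hne)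

theorem nmul_comm (a b : Ordinal.{u}) : a ⨳ b = b ⨳ a := by
  induction a using WellFoundedLT.induction generalizing b with
  | _ a iha =>
  induction b using WellFoundedLT.induction with
  | _ b ihb =>
  refine le_antisymm (nmul_le_iff.2 fun a' ha b' hb => ?_) (nmul_le_iff.2 fun b' hb a' ha => ?_)
  · rw [iha a' ha b, ihb b' hb, iha a' ha b', nadd_comm]
    exact nmul_nadd_lt hb ha
  · rw [← iha a' ha b, ← ihb b' hb, ← iha a' ha b', nadd_comm]
    exact nmul_nadd_lt ha hb

@[simp] theorem nmul_zero (a : Ordinal.{u}) : a ⨳ 0 = 0 :=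
  nonpos_iff_eq_zero.1 (nmul_le_iff.2 fun _ _ _ hb => (not_lt_zero hb).elim)

@[simp] theorem zero_nmul (a : Ordinal.{u}) : 0 ⨳ a = 0 := by
  rw [nmul_comm, nmul_zero]

@[simp] theorem nmul_one (a : Ordinal.{u}) : a ⨳ 1 = a := by
  induction a using WellFoundedLT.induction with
  | _ a ih =>
  refine le_antisymm (nmul_le_iff.2 fun a' ha b' hb => ?_) (le_of_forall_lt fun c hc => ?_)
  · obtain rfl := Order.lt_one_iff.1 hb
    simpa [ih a' ha] using ha
  · exact lt_nmul_iff.2 ⟨c, hc, 0, zero_lt_one, by simp [ih c hc]⟩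

theorem nmul_left_strictMono {c : Ordinal.{u}} (hc : 0 < c) : StrictMono (c ⨳ ·) :=
  fun _ _ h => lt_nmul_iff.2 ⟨0, hc, _, h, by simp⟩

theorem nmul_right_strictMono {c : Ordinal.{u}} (hc : 0 < c) : StrictMono (· ⨳ c) :=
  fun a b h => by simpa only [nmul_comm _ c] using nmul_left_strictMono hc h

theorem nmul_le_nmul_left {a b : Ordinal.{u}} (h : a ≤ b) (c : Ordinal.{u}) : c ⨳ a ≤ c ⨳ b := by
  rcases eq_zero_or_pos c with rfl | hc
  · simp
  · exact (nmul_left_strictMono hc).monotone h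

theorem nmul_le_nmul_right {a b : Ordinal.{u}} (h : a ≤ b) (c : Ordinal.{u}) : a ⨳ c ≤ b ⨳ c := by
  simpa only [nmul_comm _ c] using nmul_le_nmul_left h c

theorem nmul_pos {a b : Ordinal.{u}} (ha : 0 < a) (hb : 0 < b) : 0 < a ⨳ b := by
  simpa using nmul_left_strictMono ha hb

theorem nmul_nadd (a b c : Ordinal.{u}) : a ⨳ (b ♯ c) = a ⨳ b ♯ a ⨳ c := by
  induction a using WellFoundedLT.induction generalizing b c with
  | _ a iha =>
  induction b using WellFoundedLT.induction generalizing c with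
  | _ b ihb =>
  induction c using WellFoundedLT.induction with
  | _ c ihc =>
  refine le_antisymm (nmul_le_iff.2 fun a' ha d hd => ?_)
    (nadd_le_iff.2 ⟨fun x hx => ?_, fun y hy => ?_⟩)
  · rw [iha a' ha b c]
    rcases lt_nadd_iff.1 hd with ⟨b', hb, hd⟩ | ⟨c', hc, hd⟩
    · have h := nadd_lt_nadd_of_lt_of_le (nmul_nadd_lt ha hb) (nmul_nadd_le ha.le hd)
      rw [iha a' ha b' c, ihb b' hb c] at h
      apply lt_of_nadd_lt_nadd_right (c := a ⨳ b' ♯ a' ⨳ b')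
      convert h using 1 <;> ac_rfl
    · have h := nadd_lt_nadd_of_lt_of_le (nmul_nadd_lt ha hc) (nmul_nadd_le ha.le hd)
      rw [iha a' ha b c', ihc c' hc] at h
      apply lt_of_nadd_lt_nadd_right (c := a ⨳ c' ♯ a' ⨳ c')
      convert h using 1 <;> ac_rfl
  · obtain ⟨a', ha, b', hb, h⟩ := lt_nmul_iff.1 hx
    refine lt_nmul_iff.2 ⟨a', ha, b' ♯ c, nadd_right_strictMono c hb, ?_⟩
    rw [iha a' ha b' c, iha a' ha b c, ihb b' hb c]
    convert nadd_le_nadd h (le_refl (a ⨳ c ♯ a' ⨳ c)) using 1 <;> ac_rfl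
  · obtain ⟨a', ha, c', hc, h⟩ := lt_nmul_iff.1 hy
    refine lt_nmul_iff.2 ⟨a', ha, b ♯ c', nadd_left_strictMono b hc, ?_⟩
    rw [iha a' ha b c', iha a' ha b c, ihc c' hc]
    convert nadd_le_nadd h (le_refl (a ⨳ b ♯ a' ⨳ b)) using 1 <;> ac_rfl

theorem nadd_nmul (a b c : Ordinal.{u}) : (a ♯ b) ⨳ c = a ⨳ c ♯ b ⨳ c := by
  rw [nmul_comm, nmul_nadd, nmul_comm c a, nmul_comm c b]

noncomputable def nprod {n : ℕ} (f : Fin n → Ordinal.{u}) : Ordinal.{u} :=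
  (List.ofFn f).foldr (· ⨳ ·) 1

@[simp] theorem nprod_zero (f : Fin 0 → Ordinal.{u}) : nprod f = 1 := rfl

theorem nprod_succ {n : ℕ} (f : Fin (n + 1) → Ordinal.{u}) :
    nprod f = f 0 ⨳ nprod (Fin.tail f) := by
  rw [nprod, List.ofFn_succ]
  rfl

theorem nprod_mono {n : ℕ} : Monotone (nprod : (Fin n → Ordinal.{u}) → Ordinal.{u}) := by
  induction n with
  | zero => intro f g _; simp
  | succ n ih =>
    intro f g h
    rw [nprod_succ f, nprod_succ g]
    exact (nmul_le_nmul_right (h 0) _).trans (nmul_le_nmul_left (ih fun i => h i.succ) _)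

theorem nprod_pos {n : ℕ} {f : Fin n → Ordinal.{u}} (h : ∀ i, 0 < f i) : 0 < nprod f := by
  induction n with
  | zero => simp
  | succ n ih => rw [nprod_succ]; exact nmul_pos (h 0) (ih fun i => h i.succ)

theorem nprod_update_lt {n : ℕ} {f : Fin n → Ordinal.{u}} (hf : ∀ i, 0 < f i) {i : Fin n}
    {a : Ordinal.{u}} (ha : a < f i) : nprod (Function.update f i a) < nprod f := by
  induction n with
  | zero => exact i.elim0
  | succ n ih =>
    rw [nprod_succ, nprod_succ f]
    cases i using Fin.cases with
    | zero =>
      rw [Fin.tail_update_zero, Function.update_self]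
      exact nmul_right_strictMono (nprod_pos fun j => hf j.succ) ha
    | succ i =>
      rw [Fin.tail_update_succ, Function.update_of_ne (Fin.succ_ne_zero i).symm]
      exact nmul_left_strictMono (hf 0) (ih (fun j => hf j.succ) ha)

theorem nprod_update_nadd {n : ℕ} (f : Fin n → Ordinal.{u}) (i : Fin n) (a b : Ordinal.{u}) :
    nprod (Function.update f i a) ♯ nprod (Function.update f i b) =
      nprod (Function.update f i (a ♯ b)) := by
  induction n with
  | zero => exact i.elim0
  | succ n ih =>
    simp only [nprod_succ]
    cases i using Fin.cases with
    | zero => simp only [Fin.tail_update_zero, Function.update_self, nadd_nmul]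
    | succ i =>
      simp only [Fin.tail_update_succ, Function.update_of_ne (Fin.succ_ne_zero i).symm,
        ← nmul_nadd, ih]

/-! ### Natural operations on powers of `ω` -/

theorem omega0_opow_mul_nadd_of_lt {e r : Ordinal.{u}} (he : IsPrincipal (· ♯ ·) (ω ^ e))
    (hr : r < ω ^ e) (j : Ordinal.{u}) : ω ^ e * j ♯ r = ω ^ e * j + r := by
  have hω : ω ^ e ≠ 0 := opow_ne_zero e omega0_ne_zero
  induction j using WellFoundedLT.induction generalizing r with
  | _ j ihj =>
  induction r using WellFoundedLT.induction with
  | _ r ihr =>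
  refine le_antisymm (nadd_le_iff.2 ⟨fun x hx => ?_, fun r' hr' => ?_⟩) (add_le_nadd _ _)
  · have hj : x / ω ^ e < j := (lt_mul_iff_div_lt hω).1 hx
    have hs : x % ω ^ e < ω ^ e := mod_lt x hω
    calc x ♯ r = (ω ^ e * (x / ω ^ e) + x % ω ^ e) ♯ r := by rw [div_add_mod]
      _ ≤ ω ^ e * (x / ω ^ e) ♯ (x % ω ^ e ♯ r) := by
        rw [← nadd_assoc]; exact nadd_le_nadd (add_le_nadd _ _) le_rfl
      _ = ω ^ e * (x / ω ^ e) + (x % ω ^ e ♯ r) := ihj _ hj (he hs hr)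
      _ < ω ^ e * (x / ω ^ e) + ω ^ e := add_lt_add_right (he hs hr) _
      _ = ω ^ e * (x / ω ^ e + 1) := (mul_add_one _ _).symm
      _ ≤ ω ^ e * j := mul_le_mul_right (add_one_le_of_lt hj) _
      _ ≤ ω ^ e * j + r := le_self_add
  · rw [ihr r' hr' (hr'.trans hr)]
    exact add_lt_add_right hr' _

theorem omega0_opow_mul_nadd_omega0_opow {e : Ordinal.{u}} (he : IsPrincipal (· ♯ ·) (ω ^ e))
    (j : Ordinal.{u}) : ω ^ e * j ♯ ω ^ e = ω ^ e * (j + 1) := by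
  have hω : ω ^ e ≠ 0 := opow_ne_zero e omega0_ne_zero
  induction j using WellFoundedLT.induction with
  | _ j ih =>
  refine le_antisymm (nadd_le_iff.2 ⟨fun x hx => ?_, fun y hy => ?_⟩)
    (by rw [mul_add_one]; exact add_le_nadd _ _)
  · have hj : x / ω ^ e < j := (lt_mul_iff_div_lt hω).1 hx
    have hs : x % ω ^ e < ω ^ e := mod_lt x hω
    calc x ♯ ω ^ e = (ω ^ e * (x / ω ^ e) + x % ω ^ e) ♯ ω ^ e := by rw [div_add_mod]
      _ ≤ (ω ^ e * (x / ω ^ e) ♯ x % ω ^ e) ♯ ω ^ e := nadd_le_nadd (add_le_nadd _ _) le_rfl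
      _ = (ω ^ e * (x / ω ^ e) ♯ ω ^ e) ♯ x % ω ^ e := by ac_rfl
      _ = ω ^ e * (x / ω ^ e + 1) + x % ω ^ e := by
        rw [ih _ hj, omega0_opow_mul_nadd_of_lt he hs]
      _ < ω ^ e * (x / ω ^ e + 1) + ω ^ e := add_lt_add_right hs _
      _ = ω ^ e * (x / ω ^ e + 1 + 1) := (mul_add_one _ _).symm
      _ ≤ ω ^ e * (j + 1) := mul_le_mul_right (add_le_add_left (add_one_le_of_lt hj) 1) _
  · rw [omega0_opow_mul_nadd_of_lt he hy, mul_add_one]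
    exact add_lt_add_right hy _

theorem omega0_opow_mul_nadd_omega0_opow_mul_natCast {e : Ordinal.{u}}
    (he : IsPrincipal (· ♯ ·) (ω ^ e)) (j : Ordinal.{u}) (n : ℕ) :
    ω ^ e * j ♯ ω ^ e * n = ω ^ e * (j + n) := by
  induction n with
  | zero => simp
  | succ n ih =>
    rw [Nat.cast_add_one, ← omega0_opow_mul_nadd_omega0_opow he, ← nadd_assoc, ih,
      omega0_opow_mul_nadd_omega0_opow he, add_assoc]

theorem isPrincipal_nadd_omega0_opow (g : Ordinal.{u}) : IsPrincipal (· ♯ ·) (ω ^ g) := by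
  induction g using WellFoundedLT.induction with
  | _ g ih =>
  rw [isPrincipal_iff_of_monotone (fun a => (nadd_left_strictMono a).monotone)
    (fun a => (nadd_right_strictMono a).monotone)]
  intro x hx
  rcases eq_or_ne g 0 with rfl | hg
  · rw [opow_zero, Order.lt_one_iff] at hx
    simp [hx]
  obtain ⟨c, hc, m, hm⟩ := (lt_omega0_opow hg).1 hx
  calc x ♯ x < ω ^ c * m ♯ ω ^ c * m := nadd_lt_nadd_of_lt_of_le hm hm.le
    _ = ω ^ c * (m + m : ℕ) := by
      rw [omega0_opow_mul_nadd_omega0_opow_mul_natCast (ih c hc), Nat.cast_add]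
    _ < ω ^ g := opow_mul_lt_opow (natCast_lt_omega0 _) hc

theorem omega0_opow_nadd_of_lt_opow_succ {e b : Ordinal.{u}} (hb : b < ω ^ succ e) :
    ω ^ e ♯ b = ω ^ e + b := by
  have he := isPrincipal_nadd_omega0_opow e
  have hω : ω ^ e ≠ 0 := opow_ne_zero e omega0_ne_zero
  have hmod : b % ω ^ e < ω ^ e := mod_lt b hω
  obtain ⟨k, hk⟩ := lt_omega0.1 ((lt_mul_iff_div_lt hω).1 (opow_succ ω e ▸ hb))
  have hb' : ω ^ e * k + b % ω ^ e = b := by rw [← hk, div_add_mod]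
  calc ω ^ e ♯ b = ω ^ e * 1 ♯ ω ^ e * k ♯ b % ω ^ e := by
        rw [mul_one, nadd_assoc, omega0_opow_mul_nadd_of_lt he hmod, hb']
    _ = ω ^ e + b := by
        rw [omega0_opow_mul_nadd_omega0_opow_mul_natCast he, omega0_opow_mul_nadd_of_lt he hmod,
          mul_add, mul_one, add_assoc, hb']

theorem exists_add_eq_and_nadd_eq {α : Ordinal.{u}} (h0 : α ≠ 0)
    (h : ∀ g : Ordinal.{u}, ω ^ g ≠ α) :
    ∃ a < α, ∃ b < α, a + b = α ∧ a ♯ b = α := by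
  have hle : ω ^ log ω α ≤ α := opow_log_le_self ω h0
  have hadd : ω ^ log ω α + (α - ω ^ log ω α) = α := Ordinal.add_sub_cancel_of_le hle
  refine ⟨_, hle.lt_of_ne (h _), _, sub_omega0_opow_log_lt h0, hadd, ?_⟩
  rw [omega0_opow_nadd_of_lt_opow_succ
    ((sub_le_self _ _).trans_lt (lt_opow_succ_log_self one_lt_omega0 α)), hadd]

theorem omega0_opow_mul_natCast_nmul {c d e : Ordinal.{u}} (h : ω ^ c ⨳ d = ω ^ e) (n : ℕ) :
    (ω ^ c * n) ⨳ d = ω ^ e * n := by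
  induction n with
  | zero => simp
  | succ n ih =>
    rw [Nat.cast_add_one, ← omega0_opow_mul_nadd_omega0_opow (isPrincipal_nadd_omega0_opow c),
      nadd_nmul, ih, h, omega0_opow_mul_nadd_omega0_opow (isPrincipal_nadd_omega0_opow e)]

theorem nmul_omega0_opow_lt {a b x : Ordinal.{u}} (hx : x < ω ^ a)
    (ih : ∀ a' < a, ω ^ a' ⨳ ω ^ b = ω ^ (a' ♯ b)) : x ⨳ ω ^ b < ω ^ (a ♯ b) := by
  rcases eq_or_ne a 0 with rfl | ha
  · rw [opow_zero, Order.lt_one_iff] at hx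
    simpa [hx] using opow_pos _ omega0_pos
  obtain ⟨c, hc, m, hm⟩ := (lt_omega0_opow ha).1 hx
  calc x ⨳ ω ^ b ≤ (ω ^ c * m) ⨳ ω ^ b := nmul_le_nmul_right hm.le _
    _ = ω ^ (c ♯ b) * m := omega0_opow_mul_natCast_nmul (ih c hc) m
    _ < ω ^ (a ♯ b) := opow_mul_lt_opow (natCast_lt_omega0 m) (nadd_right_strictMono b hc)

theorem omega0_opow_mul_natCast_le_nmul {a a' b c : Ordinal.{u}} (ha : a' < a) (hc : c ≤ a' ♯ b)
    (h : ω ^ a' ⨳ ω ^ b = ω ^ (a' ♯ b)) (m : ℕ) : ω ^ c * m ≤ ω ^ a ⨳ ω ^ b :=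
  calc ω ^ c * m ≤ ω ^ (a' ♯ b) * m := mul_le_mul_left (opow_le_opow_right omega0_pos hc) _
    _ = (ω ^ a' * m) ⨳ ω ^ b := (omega0_opow_mul_natCast_nmul h m).symm
    _ ≤ ω ^ a ⨳ ω ^ b := nmul_le_nmul_right (opow_mul_lt_opow (natCast_lt_omega0 m) ha).le _

theorem omega0_opow_nmul_omega0_opow (a b : Ordinal.{u}) : ω ^ a ⨳ ω ^ b = ω ^ (a ♯ b) := by
  induction a using WellFoundedLT.induction generalizing b with
  | _ a iha =>
  induction b using WellFoundedLT.induction with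
  | _ b ihb =>
  have iha' : ∀ a' < a, ω ^ a' ⨳ ω ^ b = ω ^ (a' ♯ b) := fun a' h => iha a' h b
  have ihb' : ∀ b' < b, ω ^ b' ⨳ ω ^ a = ω ^ (b' ♯ a) := fun b' h => by
    rw [nmul_comm, nadd_comm, ihb b' h]
  refine le_antisymm (nmul_le_iff.2 fun x hx y hy => ?_) (le_of_forall_lt fun z hz => ?_)
  · have hy' : ω ^ a ⨳ y < ω ^ (a ♯ b) := by
      rw [nmul_comm, nadd_comm]; exact nmul_omega0_opow_lt hy ihb'
    exact (isPrincipal_nadd_omega0_opow _ (nmul_omega0_opow_lt hx iha') hy').trans_le le_self_nadd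
  rcases eq_or_ne (a ♯ b) 0 with h | h
  · rw [h, opow_zero, Order.lt_one_iff] at hz
    exact hz ▸ nmul_pos (opow_pos a omega0_pos) (opow_pos b omega0_pos)
  obtain ⟨c, hc, m, hm⟩ := (lt_omega0_opow h).1 hz
  refine hm.trans_le ?_
  rcases lt_nadd_iff.1 hc with ⟨a', ha, hc⟩ | ⟨b', hb, hc⟩
  · exact omega0_opow_mul_natCast_le_nmul ha hc (iha' a' ha) m
  · rw [nmul_comm]
    exact omega0_opow_mul_natCast_le_nmul hb (by rwa [nadd_comm]) (ihb' b' hb) m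

theorem isPrincipal_nadd_nprod_omega0_opow {n : ℕ} (g : Fin n → Ordinal.{u}) :
    IsPrincipal (· ♯ ·) (nprod fun i => ω ^ g i) := by
  suffices ∃ e : Ordinal.{u}, nprod (fun i => ω ^ g i) = ω ^ e by
    obtain ⟨e, he⟩ := this
    exact he ▸ isPrincipal_nadd_omega0_opow e
  induction n with
  | zero => exact ⟨0, by simp⟩
  | succ n ih =>
    obtain ⟨e, he⟩ := ih (Fin.tail g)
    exact ⟨g 0 ♯ e, by rw [nprod_succ, ← omega0_opow_nmul_omega0_opow, ← he]; rfl⟩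

end Ordinal

open Ordinal

/-! ### Ranks of subsets -/

section Rank

variable {X Y : Type u} [PartialOrder X] [WellFoundedLT X] [PartialOrder Y] [WellFoundedLT Y]

theorem elRank_lt_elRank {p q : X} (h : q < p) : elRank q < elRank p :=
  IsWellFounded.rank_lt_of_rel h

theorem elRank_le_iff {p : X} {c : Ordinal.{u}} : elRank p ≤ c ↔ ∀ q < p, elRank q < c := by
  rw [elRank, IsWellFounded.rank_eq, Ordinal.iSup_le_iff]
  simp only [Order.succ_le_iff, Subtype.forall]
  rfl

theorem ordRank_le_iff {c : Ordinal.{u}} : ordRank X ≤ c ↔ ∀ p : X, elRank p < c := by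
  simp only [ordRank, Ordinal.iSup_le_iff, Order.add_one_le_iff]

theorem elRank_lt_ordRank (p : X) : elRank p < ordRank X :=
  Order.add_one_le_iff.1 (Ordinal.le_iSup (fun p : X => elRank p + 1) p)

theorem ordRank_pos [Nonempty X] : 0 < ordRank X :=
  pos_of_gt (elRank_lt_ordRank (Classical.arbitrary X))

theorem elRank_le_of_strictMono {f : X → Ordinal.{u}} (hf : StrictMono f) (p : X) :
    elRank p ≤ f p := by
  induction p using WellFoundedLT.induction with
  | _ p ih => exact elRank_le_iff.2 fun q hq => (ih q hq).trans_lt (hf hq)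

theorem ordRank_le_of_strictMono {f : X → Y} (hf : StrictMono f) : ordRank X ≤ ordRank Y :=
  ordRank_le_iff.2 fun p =>
    (elRank_le_of_strictMono (fun _ _ h => elRank_lt_elRank (hf h)) p).trans_lt
      (elRank_lt_ordRank (f p))

theorem ordRank_mono {S T : Set X} (h : S ⊆ T) : ordRank S ≤ ordRank T :=
  ordRank_le_of_strictMono (f := Set.inclusion h) fun _ _ => id

theorem ordRank_set_le (S : Set X) : ordRank S ≤ ordRank X :=
  ordRank_le_of_strictMono (Subtype.strictMono_coe _)

theorem ordRank_le_of_forall_mem {S : Set X} (h : ∀ p, p ∈ S) : ordRank X ≤ ordRank S :=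
  ordRank_le_of_strictMono (f := fun p => ⟨p, h p⟩) fun _ _ => id

theorem elRank_le_elRank_coe {S : Set X} (p : S) : elRank p ≤ elRank (p : X) :=
  elRank_le_of_strictMono (f := fun q : S => elRank (q : X)) (fun _ _ h => elRank_lt_elRank h) p

theorem elRank_coe_of_isLowerSet {S : Set X} (hS : IsLowerSet S) (p : S) :
    elRank (p : X) = elRank p := by
  induction p using WellFoundedLT.induction with
  | _ p ih =>
  refine le_antisymm (elRank_le_iff.2 fun q hq => ?_) (elRank_le_elRank_coe p)
  have hqS : q ∈ S := hS hq.le p.2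
  exact (ih ⟨q, hqS⟩ hq).trans_lt (elRank_lt_elRank (show (⟨q, hqS⟩ : S) < p from hq))

theorem ordRank_Iio (p : X) : ordRank (Set.Iio p) = elRank p := by
  refine le_antisymm (ordRank_le_iff.2 fun q => ?_) (elRank_le_iff.2 fun q hq => ?_)
  · rw [← elRank_coe_of_isLowerSet (isLowerSet_Iio p)]
    exact elRank_lt_elRank q.2
  · exact (elRank_coe_of_isLowerSet (isLowerSet_Iio p) ⟨q, hq⟩).trans_lt (elRank_lt_ordRank _)

theorem ordRank_setOf_elRank_lt_le (a : Ordinal.{u}) : ordRank {x : X | elRank x < a} ≤ a :=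
  ordRank_le_iff.2 fun x => (elRank_le_elRank_coe x).trans_lt x.2

theorem ordRank_setOf_le_elRank_le (a : Ordinal.{u}) :
    ordRank {x : X | a ≤ elRank x} ≤ ordRank X - a := by
  have hsub : ∀ (x : {x : X | a ≤ elRank x}) c, elRank (x : X) < c → elRank (x : X) - a < c - a :=
    fun x _ h => lt_sub.2 (by rwa [Ordinal.add_sub_cancel_of_le x.2])
  have hmono : StrictMono fun x : {x : X | a ≤ elRank x} => elRank (x : X) - a :=
    fun x _ h => hsub x _ (elRank_lt_elRank h)
  exact ordRank_le_iff.2 fun x =>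
    (elRank_le_of_strictMono hmono x).trans_lt (hsub x _ (elRank_lt_ordRank _))

noncomputable def rankBelow (S : Set X) (x : X) : Ordinal.{u} :=
  ordRank {s : S | (s : X) < x}

theorem rankBelow_mono (S : Set X) : Monotone (rankBelow S) :=
  fun _ _ h => ordRank_mono fun _ hs => lt_of_lt_of_le hs h

theorem rankBelow_eq_elRank {S : Set X} (s : S) : rankBelow S s = elRank s :=
  ordRank_Iio s

theorem rankBelow_lt_rankBelow {S : Set X} {x y : X} (hx : x ∈ S) (h : x < y) :
    rankBelow S x < rankBelow S y := by
  have hS : IsLowerSet {s : S | (s : X) < y} := fun _ _ hab hb => lt_of_le_of_lt hab hb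
  calc rankBelow S x = elRank (⟨x, hx⟩ : S) := rankBelow_eq_elRank ⟨x, hx⟩
    _ = elRank (⟨⟨x, hx⟩, h⟩ : {s : S | (s : X) < y}) := elRank_coe_of_isLowerSet hS ⟨⟨x, hx⟩, h⟩
    _ < rankBelow S y := elRank_lt_ordRank _

theorem ordRank_union_le (A B : Set X) : ordRank ↥(A ∪ B) ≤ ordRank A ♯ ordRank B := by
  have hmono : StrictMono fun p : ↥(A ∪ B) => rankBelow A p ♯ rankBelow B p := by
    intro p q h
    rcases p with ⟨p, hA | hB⟩
    · exact nadd_lt_nadd_of_lt_of_le (rankBelow_lt_rankBelow hA h) (rankBelow_mono B h.le)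
    · exact nadd_lt_nadd_of_le_of_lt (rankBelow_mono A h.le) (rankBelow_lt_rankBelow hB h)
  refine ordRank_le_iff.2 fun p => (elRank_le_of_strictMono hmono p).trans_lt ?_
  rcases p with ⟨p, hA | hB⟩
  · exact nadd_lt_nadd_of_lt_of_le ((rankBelow_eq_elRank ⟨p, hA⟩).trans_lt (elRank_lt_ordRank _))
      (ordRank_set_le _)
  · exact nadd_lt_nadd_of_le_of_lt (ordRank_set_le _)
      ((rankBelow_eq_elRank ⟨p, hB⟩).trans_lt (elRank_lt_ordRank _))

theorem ordRank_lt_of_subset_iUnion {ι : Type*} [Fintype ι] {μ : Ordinal.{u}}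
    (hμ : IsPrincipal (· ♯ ·) μ) (hμ0 : 0 < μ) {F : ι → Set X} (hF : ∀ i, ordRank (F i) < μ)
    {T : Set X} (hT : T ⊆ ⋃ i, F i) : ordRank T < μ := by
  classical
  suffices ∀ (s : Finset ι) (T : Set X), T ⊆ ⋃ i ∈ s, F i → ordRank T < μ from
    this Finset.univ T (by simpa using hT)
  intro s
  induction s using Finset.induction_on with
  | empty =>
    intro T hT
    exact (ordRank_le_iff.2 fun p => absurd (hT p.2) (by simp)).trans_lt hμ0
  | insert i s _ ih =>
    intro T hT
    rw [Finset.set_biUnion_insert] at hT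
    calc ordRank T ≤ ordRank ↥(F i ∪ ⋃ j ∈ s, F j) := ordRank_mono hT
      _ ≤ ordRank (F i) ♯ ordRank ↥(⋃ j ∈ s, F j) := ordRank_union_le _ _
      _ < μ := hμ (hF i) (ih _ subset_rfl)

end Rank

/-! ### Box-augmentations -/

section Box

variable {n : ℕ} {P : Type u} [PartialOrder P] {Q : Fin n → Type u} [∀ i, PartialOrder (Q i)]

def CoordwiseComparable (η : (∀ i, Q i) ≃ P) : Prop :=
  ∀ c d, η c ≤ η d → ∀ k, c k ≤ d k ∨ d k ≤ c k

theorem UpwardsLinear.le_total_of_le {X : Type u} [PartialOrder X] (h : UpwardsLinear X)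
    {p x y : X} (hx : p ≤ x) (hy : p ≤ y) : x ≤ y ∨ y ≤ x := by
  rcases hx.eq_or_lt with rfl | hx
  · exact Or.inl hy
  rcases hy.eq_or_lt with rfl | hy
  · exact Or.inr hx.le
  exact h p x y hx hy

theorem ConnectedOrder.isDirected {X : Type u} [PartialOrder X] (hC : ConnectedOrder X)
    (hU : UpwardsLinear X) : IsDirected X (· ≤ ·) := by
  refine ⟨fun x y => ?_⟩
  induction hC x y with
  | refl => exact ⟨x, le_rfl, le_rfl⟩
  | tail _ hbc ih =>
    obtain ⟨z, hxz, hbz⟩ := ih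
    rcases hbc with hbc | hcb
    · rcases hU.le_total_of_le hbz hbc with h | h
      · exact ⟨_, hxz.trans h, le_rfl⟩
      · exact ⟨z, hxz, h⟩
    · exact ⟨z, hxz, hcb.trans hbz⟩

theorem IsBoxAugmentation.monotone {η : (∀ i, Q i) ≃ P} (hbox : IsBoxAugmentation P Q η) :
    Monotone η := by
  suffices ∀ (s : Finset (Fin n)) (c d : ∀ i, Q i), c ≤ d → (∀ i ∉ s, c i = d i) → η c ≤ η d from
    fun c d h => this Finset.univ c d h (by simp)
  intro s
  induction s using Finset.induction_on with
  | empty => intro c d _ h; rw [funext fun i => h i (Finset.notMem_empty i)]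
  | insert k s _ ih =>
    intro c d hcd h
    calc η c = η (Function.update c k (c k)) := by rw [Function.update_eq_self]
      _ ≤ η (Function.update c k (d k)) := (hbox k c _ _).1 (hcd k)
      _ ≤ η d := ih _ _ (update_le_iff.2 ⟨le_rfl, fun j _ => hcd j⟩) fun i hi => by
          rcases eq_or_ne i k with rfl | hik
          · simp
          · rw [Function.update_of_ne hik]; exact h i (by simp [hik, hi])

theorem IsBoxAugmentation.coordwiseComparable {η : (∀ i, Q i) ≃ P}
    (hbox : IsBoxAugmentation P Q η) (hP : UpwardsLinear P) [∀ i, IsDirected (Q i) (· ≤ ·)] :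
    CoordwiseComparable η := by
  intro c d hcd k
  choose u hcu hdu using fun i => directed_of (· ≤ ·) (c i) (d i)
  have hc : η c ≤ η (Function.update u k (c k)) :=
    hbox.monotone (le_update_iff.2 ⟨le_rfl, fun j _ => hcu j⟩)
  have hd : η c ≤ η (Function.update u k (d k)) :=
    hcd.trans (hbox.monotone (le_update_iff.2 ⟨le_rfl, fun j _ => hdu j⟩))
  exact (hP.le_total_of_le hc hd).imp (hbox k u _ _).2 (hbox k u _ _).2

theorem CoordwiseComparable.exists_lt_of_lt {η : (∀ i, Q i) ≃ P} (hc : CoordwiseComparable η)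
    (hη : Monotone η) {p q : P} (h : q < p) : ∃ i, η.symm q i < η.symm p i := by
  by_contra! hqp
  have hpq : η.symm p ≤ η.symm q := fun i =>
    (hc _ _ (by simpa using h.le) i).elim (fun h => (h.lt_or_eq.resolve_left (hqp i)).ge) id
  exact h.not_ge (by simpa using hη hpq)

def subBoxEquiv (η : (∀ i, Q i) ≃ P) (T : ∀ i, Set (Q i)) :
    (∀ i, T i) ≃ ↥(η.symm ⁻¹' Set.univ.pi T) :=
  Equiv.subtypePiEquivPi.symm.trans (η.subtypeEquiv fun c => by simp)

theorem subBoxEquiv_monotone {η : (∀ i, Q i) ≃ P} (hη : Monotone η) (T : ∀ i, Set (Q i)) :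
    Monotone (subBoxEquiv η T) :=
  fun _ _ h => hη fun i => h i

theorem coordwiseComparable_subBoxEquiv {η : (∀ i, Q i) ≃ P} (hc : CoordwiseComparable η)
    (T : ∀ i, Set (Q i)) : CoordwiseComparable (subBoxEquiv η T) :=
  fun f g h k => hc (fun i => f i) (fun i => g i) h k

end Box

section Main

variable {n : ℕ} {P : Type u} [PartialOrder P] [WellFoundedLT P] {Q : Fin n → Type u}
  [∀ i, PartialOrder (Q i)] [∀ i, WellFoundedLT (Q i)]

def SlabRankBound (η : (∀ i, Q i) ≃ P) : Prop :=
  ∀ i (S : Set (Q i)), ordRank S < ordRank (Q i) →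
    ordRank {p | η.symm p i ∈ S} ≤ nprod (Function.update (fun i => ordRank (Q i)) i (ordRank S))

variable {η : (∀ i, Q i) ≃ P}

theorem ordRank_le_nprod_of_isPrincipal (hη : Monotone η) (hc : CoordwiseComparable η)
    (hpos : ∀ i, 0 < ordRank (Q i)) (hμ : IsPrincipal (· ♯ ·) (nprod fun i => ordRank (Q i)))
    (hslab : SlabRankBound η) :
    ordRank P ≤ nprod fun i => ordRank (Q i) := by
  refine ordRank_le_iff.2 fun p => ?_
  have hcover : Set.Iio p ⊆ ⋃ i, {q | η.symm q i ∈ Set.Iio (η.symm p i)} :=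
    fun q hq => Set.mem_iUnion.2 (hc.exists_lt_of_lt hη hq)
  have hlt : ∀ i, ordRank ↥{q | η.symm q i ∈ Set.Iio (η.symm p i)} < nprod fun i => ordRank (Q i) :=
    fun i => by
      have h := elRank_lt_ordRank (η.symm p i)
      rw [← ordRank_Iio] at h
      exact (hslab i _ h).trans_lt (nprod_update_lt hpos h)
  calc elRank p = ordRank (Set.Iio p) := (ordRank_Iio p).symm
    _ < _ := ordRank_lt_of_subset_iUnion hμ (nprod_pos hpos) hlt hcover

theorem ordRank_le_nprod_of_split (hslab : SlabRankBound η) (i : Fin n) {a b : Ordinal.{u}}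
    (ha : a < ordRank (Q i)) (hb : b < ordRank (Q i)) (hadd : a + b = ordRank (Q i))
    (hnadd : a ♯ b = ordRank (Q i)) :
    ordRank P ≤ nprod fun i => ordRank (Q i) := by
  let D : Set (Q i) := {x | elRank x < a}
  let U : Set (Q i) := {x | a ≤ elRank x}
  have hD : ordRank D ≤ a := ordRank_setOf_elRank_lt_le a
  have hU : ordRank U ≤ b :=
    (ordRank_setOf_le_elRank_le a).trans_eq (by rw [← hadd, Ordinal.add_sub_cancel])
  calc ordRank P ≤ ordRank ↥({p | η.symm p i ∈ D} ∪ {p | η.symm p i ∈ U}) :=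
        ordRank_le_of_forall_mem fun p => lt_or_ge (elRank (η.symm p i)) a
    _ ≤ ordRank ↥{p | η.symm p i ∈ D} ♯ ordRank ↥{p | η.symm p i ∈ U} := ordRank_union_le _ _
    _ ≤ nprod (Function.update (fun i => ordRank (Q i)) i a) ♯
          nprod (Function.update (fun i => ordRank (Q i)) i b) :=
        nadd_le_nadd ((hslab i D (hD.trans_lt ha)).trans (nprod_mono (update_le_update_iff'.2 hD)))
          ((hslab i U (hU.trans_lt hb)).trans (nprod_mono (update_le_update_iff'.2 hU)))
    _ = nprod fun i => ordRank (Q i) := by rw [nprod_update_nadd, hnadd, Function.update_eq_self]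

end Main

theorem ordRank_le_nprod_of_coordwiseComparable {n : ℕ} {P : Type u} [PartialOrder P]
    [WellFoundedLT P] {Q : Fin n → Type u} [∀ i, PartialOrder (Q i)] [∀ i, WellFoundedLT (Q i)]
    (η : (∀ i, Q i) ≃ P) (hη : Monotone η) (hc : CoordwiseComparable η) :
    ordRank P ≤ nprod fun i => ordRank (Q i) := by
  generalize hμ : (nprod fun i => ordRank (Q i)) = μ
  induction μ using WellFoundedLT.induction generalizing P Q with
  | _ μ ih =>
  subst hμ
  rcases isEmpty_or_nonempty P with hP | ⟨⟨p⟩⟩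
  · exact ordRank_le_iff.2 isEmptyElim
  have hpos : ∀ i, 0 < ordRank (Q i) := fun i =>
    have : Nonempty (Q i) := ⟨η.symm p i⟩
    ordRank_pos
  have hslab : SlabRankBound η := by
    intro i S hS
    have hT : (nprod fun j => ordRank ↥(Function.update (fun j => Set.univ) i S j)) ≤
        nprod (Function.update (fun i => ordRank (Q i)) i (ordRank S)) := nprod_mono fun j => by
      rcases eq_or_ne j i with rfl | hj
      · rw [Function.update_self, Function.update_self]
      · simp [hj, ordRank_set_le]
    have h := ih _ (hT.trans_lt (nprod_update_lt hpos hS)) (subBoxEquiv η _)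
      (subBoxEquiv_monotone hη _) (coordwiseComparable_subBoxEquiv hc _) rfl
    rw [Set.univ_pi_update_univ] at h
    exact h.trans hT
  by_cases hpow : ∀ i, ∃ g : Ordinal.{u}, ω ^ g = ordRank (Q i)
  · choose g hg using hpow
    have hμ := isPrincipal_nadd_nprod_omega0_opow g
    simp only [hg] at hμ
    exact ordRank_le_nprod_of_isPrincipal hη hc hpos hμ hslab
  · push Not at hpow
    obtain ⟨i, hi⟩ := hpow
    obtain ⟨a, ha, b, hb, hadd, hnadd⟩ := exists_add_eq_and_nadd_eq (hpos i).ne' hi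
    exact ordRank_le_nprod_of_split hslab i ha hb hadd hnadd

/-- If a wulpo `P` is a box-augmentation of connected wulpos `Q 0, …, Q (n-1)`, then
`rank P ≤ rank (Q 0) ⨳ ⋯ ⨳ rank (Q (n-1))`, where `⨳` is the natural (Hessenberg)
product. -/
theorem rank_boxAugmentation_connected {n : ℕ} {P : Type u} [PartialOrder P]
    [WellFoundedLT P] (Q : Fin n → Type u) [∀ i, PartialOrder (Q i)]
    [∀ i, WellFoundedLT (Q i)] (hP : UpwardsLinear P) (hQ : ∀ i, UpwardsLinear (Q i))
    (hconn : ∀ i, ConnectedOrder (Q i))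
    (η : (∀ i, Q i) ≃ P) (hbox : IsBoxAugmentation P Q η) :
    ordRank P ≤ (List.ofFn fun i => ordRank (Q i)).foldr (· ⨳ ·) 1 := by
  have := fun i => (hconn i).isDirected (hQ i)
  exact ordRank_le_nprod_of_coordwiseComparable η hbox.monotone (hbox.coordwiseComparable hP)
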